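/- For each integer j ≥ 2 and each real ε > 0, the infinite series ∑_{k=1}^{∞} 1/(k·h_1(k)·h_2(k)⋯h_{j−2}(k)·(h_{j−1}(k))^{1+ε}) converges. -/

import Mathlib

open Filter Finset

/-- The `j`-th iterated natural logarithm: `ln_j(x) = ln(ln(⋯ln(x)⋯))` (`j` times). -/
noncomputable def lnIter (j : ℕ) (x : ℝ) : ℝ := Real.log^[j] x

/-- The denominator `x · ln x · ln_2 x ⋯ ln_{j-1} x`. -/
noncomputable def denomL (j : ℕ) (x : ℝ) : ℝ := x * ∏ i ∈ Finset.Icc 1 (j - 1), lnIter i x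

/-- Hyperpowers of `e`: `⁰e = 1`, `^{i+1}e = e^(^{i}e)`. -/
noncomputable def hyperE : ℕ → ℝ
  | 0 => 1
  | i + 1 => Real.exp (hyperE i)

/-- The lower summation limit `a(j)`: `a(2) = 2` and `a(j) = ⌈^{j-2}e⌉` for `j ≥ 3`. -/
noncomputable def lowerA (j : ℕ) : ℕ := if j = 2 then 2 else ⌈hyperE (j - 2)⌉₊

/-- `l_j(n) = ∑_{k=a(j)}^{n} 1/(k·ln k·ln_2 k⋯ln_{j-1} k)`. -/
noncomputable def lSum (j n : ℕ) : ℝ := ∑ k ∈ Finset.Icc (lowerA j) n, 1 / denomL j (k : ℝ)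

/-- `denomH j k = k · h_1(k) · h_2(k) ⋯ h_j(k)`, the denominator appearing in `h_{j+1}`. -/
def denomH : ℕ → ℕ → ℚ
  | 0, k => (k : ℚ)
  | j + 1, k => denomH j k * ∑ m ∈ Finset.Icc 1 k, 1 / denomH j m

/-- The `j`-th iterated harmonic number (`j ≥ 1`):
`h_1(n) = ∑_{k=1}^n 1/k` and `h_j(n) = ∑_{k=1}^{n} 1/(k·h_1(k)⋯h_{j-1}(k))`. -/
def hIter (j n : ℕ) : ℚ := ∑ k ∈ Finset.Icc 1 n, 1 / denomH (j - 1) k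

lemma denomH_pos (m : ℕ) : ∀ k, 1 ≤ k → 0 < denomH m k := by
  induction m with
  | zero => intro k hk; simpa [denomH] using (by exact_mod_cast hk : (1:ℚ) ≤ k).trans_lt' one_pos
  | succ m ih =>
    intro k hk
    simp only [denomH]
    refine mul_pos (ih k hk) (Finset.sum_pos (fun i hi => ?_) ?_)
    · exact div_pos one_pos (ih i (Finset.mem_Icc.mp hi).1)
    · exact ⟨1, Finset.mem_Icc.mpr ⟨le_refl 1, hk⟩⟩

lemma denomH_zero (m : ℕ) : denomH m 0 = 0 := by
  cases m with
  | zero => simp [denomH]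
  | succ m => simp [denomH]

lemma hIter_pos (j k : ℕ) (hk : 1 ≤ k) : 0 < hIter j k :=
  Finset.sum_pos (fun i hi => div_pos one_pos (denomH_pos _ i (Finset.mem_Icc.mp hi).1))
    ⟨1, Finset.mem_Icc.mpr ⟨le_refl 1, hk⟩⟩

lemma hIter_succ (j k : ℕ) : hIter j (k + 1) = hIter j k + 1 / denomH (j - 1) (k + 1) := by
  unfold hIter
  exact Finset.sum_Icc_succ_top (Nat.le_add_left 1 k) _

lemma key_ineq (ε s t : ℝ) (hε : 0 < ε) (hs : 0 < s) (hst : s ≤ t) :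
    (t - s) / t ^ (1 + ε) ≤ (1 / ε) * (s ^ (-ε) - t ^ (-ε)) := by
  have ht : 0 < t := hs.trans_le hst
  have hlog : 1 - s / t ≤ Real.log t - Real.log s := by
    have h := Real.log_le_sub_one_of_pos (div_pos hs ht)
    rw [Real.log_div hs.ne' ht.ne'] at h
    linarith
  have hexp : s ^ (-ε) = t ^ (-ε) * Real.exp (ε * (Real.log t - Real.log s)) := by
    rw [Real.rpow_def_of_pos hs, Real.rpow_def_of_pos ht, ← Real.exp_add]
    ring_nf
  have h2 : t ^ (-ε) * (ε * (Real.log t - Real.log s)) ≤ s ^ (-ε) - t ^ (-ε) := by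
    rw [hexp]
    have h3 := Real.add_one_le_exp (ε * (Real.log t - Real.log s))
    have h4 : 0 ≤ t ^ (-ε) := (Real.rpow_pos_of_pos ht _).le
    nlinarith [mul_le_mul_of_nonneg_left h3 h4]
  have heq : (t - s) / t ^ (1 + ε) = t ^ (-ε) * (1 - s / t) := by
    rw [Real.rpow_add ht, Real.rpow_one, Real.rpow_neg ht.le]
    have h1 : (1 : ℝ) - s / t = (t - s) / t := by field_simp
    rw [h1, inv_mul_eq_div, div_div, mul_comm]
  rw [heq]
  have h5 : t ^ (-ε) * (1 - s / t) ≤ t ^ (-ε) * (Real.log t - Real.log s) :=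
    mul_le_mul_of_nonneg_left hlog (Real.rpow_pos_of_pos ht _).le
  calc t ^ (-ε) * (1 - s / t) ≤ t ^ (-ε) * (Real.log t - Real.log s) := h5
    _ = (1 / ε) * (t ^ (-ε) * (ε * (Real.log t - Real.log s))) := by field_simp
    _ ≤ (1 / ε) * (s ^ (-ε) - t ^ (-ε)) := by
        exact mul_le_mul_of_nonneg_left h2 (by positivity)

/-- For each `j ≥ 2` and each `ε > 0`, the series
`∑_{k=1}^∞ 1/(k·h_1(k)⋯h_{j−2}(k)·(h_{j−1}(k))^{1+ε})` converges.
(Here `k·h_1(k)⋯h_{j−2}(k) = denomH (j-2) k`; the term at `k = 0` is `0`.) -/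
theorem iterated_harmonic_epsilon_summable (j : ℕ) (hj : 2 ≤ j) (ε : ℝ) (hε : 0 < ε) :
    Summable (fun k : ℕ =>
      (1 : ℝ) / ((denomH (j - 2) k : ℝ) * (hIter (j - 1) k : ℝ) ^ (1 + ε))) := by
  set D : ℕ → ℝ := fun k => ((denomH (j - 2) k : ℚ) : ℝ) with hD
  set S : ℕ → ℝ := fun k => ((hIter (j - 1) k : ℚ) : ℝ) with hS
  set f : ℕ → ℝ := fun k => (1 : ℝ) / (D k * S k ^ (1 + ε)) with hf
  have hDpos : ∀ k, 1 ≤ k → 0 < D k := fun k hk => by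
    simp only [hD]; exact_mod_cast denomH_pos (j - 2) k hk
  have hSpos : ∀ k, 1 ≤ k → 0 < S k := fun k hk => by
    simp only [hS]; exact_mod_cast hIter_pos (j - 1) k hk
  have hS0 : S 0 = 0 := by simp [hS, hIter]
  have hidx : j - 1 - 1 = j - 2 := by omega
  have hSsucc : ∀ k, S (k + 1) = S k + 1 / D (k + 1) := by
    intro k
    have h := hIter_succ (j - 1) k
    rw [hidx] at h
    simp only [hS, hD]
    exact_mod_cast h
  have hf0 : f 0 = 0 := by
    simp [hf, hD, denomH_zero]
  have hfnonneg : ∀ k, 0 ≤ f k := by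
    intro k
    rcases Nat.eq_zero_or_pos k with rfl | hk
    · rw [hf0]
    · have := hDpos k hk
      have := hSpos k hk
      positivity
  have hmono : ∀ k, S k ≤ S (k + 1) := by
    intro k
    rw [hSsucc k]
    have : 0 ≤ 1 / D (k + 1) := le_of_lt (div_pos one_pos (hDpos _ (Nat.le_add_left 1 k)))
    linarith
  have hIcc : ∀ n, ∑ k ∈ Finset.Icc 2 n, f k ≤ (1 / ε) * ((S 1) ^ (-ε) - (S n) ^ (-ε)) := by
    intro n
    induction n with
    | zero =>
      rw [show Finset.Icc 2 0 = ∅ from rfl, Finset.sum_empty, hS0,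
        Real.zero_rpow (neg_ne_zero.mpr hε.ne'), sub_zero]
      have := hSpos 1 le_rfl
      positivity
    | succ n ih =>
      rcases Nat.eq_zero_or_pos n with rfl | hn
      · rw [show Finset.Icc 2 1 = ∅ from rfl, Finset.sum_empty, sub_self, mul_zero]
      · rw [Finset.sum_Icc_succ_top (by omega : 2 ≤ n + 1)]
        have hstep : f (n + 1) ≤ (1 / ε) * ((S n) ^ (-ε) - (S (n + 1)) ^ (-ε)) := by
          have ha : S (n + 1) - S n = 1 / D (n + 1) := by rw [hSsucc n]; ring
          have hfeq : f (n + 1) = (S (n + 1) - S n) / (S (n + 1)) ^ (1 + ε) := by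
            simp only [hf]
            rw [ha, div_div]
          rw [hfeq]
          exact key_ineq ε (S n) (S (n + 1)) hε (hSpos n hn) (hmono n)
        linarith
  apply summable_of_sum_range_le (c := f 1 + (1 / ε) * (S 1) ^ (-ε)) hfnonneg
  intro n
  have hsub : Finset.range n ⊆ insert 0 (insert 1 (Finset.Icc 2 (n - 1))) := by
    intro k hk
    simp only [Finset.mem_range] at hk
    simp only [Finset.mem_insert, Finset.mem_Icc]
    omega
  calc ∑ i ∈ Finset.range n, f i
      ≤ ∑ i ∈ insert 0 (insert 1 (Finset.Icc 2 (n - 1))), f i :=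
        Finset.sum_le_sum_of_subset_of_nonneg hsub (fun i _ _ => hfnonneg i)
    _ = f 0 + (f 1 + ∑ i ∈ Finset.Icc 2 (n - 1), f i) := by
        rw [Finset.sum_insert (by simp), Finset.sum_insert (by simp)]
    _ ≤ f 1 + (1 / ε) * (S 1) ^ (-ε) := by
        have h1 := hIcc (n - 1)
        have h2 : 0 ≤ (S (n - 1)) ^ (-ε) := by
          rcases Nat.eq_zero_or_pos (n - 1) with h | h
          · rw [h, hS0]; positivity
          · exact (Real.rpow_pos_of_pos (hSpos _ h) _).le
        have h3 : 0 ≤ 1 / ε := by positivity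
        rw [hf0]
        nlinarith
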